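/- arXiv:1201.3928 — 4 statements merged into one kernel-verified Lean document; each statement's English description precedes it below -/
import Mathlib

section
/- Fundamental Lemma: Let P(λ) = Σ_{n≤N} pₙλⁿ and Q(λ) = Σ_{n≤M} qₙλⁿ be symbols with coefficients in R. Then the bilinear residue equation Res_λ ( P(λ) · Q^y(−λ) · e^{−yλ/h} ) dλ = 0, holding identically as an element of R[[y]] (each coefficient of a power of y being a finite sum in R), is equivalent to the pseudo-differential operator equation ( P(h∂) · Q(h∂)* )₋ = 0. -/
open scoped BigOperators

/-- Generalized binomial coefficient `C(k,l) = k(k-1)⋯(k-l+1)/l!` for `k : ℤ`. -/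
def gbinom (k : ℤ) (l : ℕ) : ℚ :=
  (∏ i ∈ Finset.range l, ((k : ℚ) - i)) / (Nat.factorial l)

/-- Pseudo-differential operators (and symbols): coefficient functions `ℤ → R`
with support bounded above.  The parameter `d` (the derivation) determines the product. -/
structure PDO (R : Type) [CommRing R] [Algebra ℚ R] (d : R →+ R) where
  coeff : ℤ → R
  bdd : ∃ N : ℤ, ∀ n : ℤ, N < n → coeff n = 0

namespace PDO

variable {R : Type} [CommRing R] [Algebra ℚ R] {d : R →+ R}

theorem ext' {A B : PDO R d} (h : A.coeff = B.coeff) : A = B := by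
  cases A; cases B; cases h; rfl

set_option linter.unusedSectionVars false in
theorem iterD_zero (d : R →+ R) (j : ℕ) : d^[j] (0 : R) = 0 := by
  induction j with
  | zero => rfl
  | succ j ih => rw [Function.iterate_succ_apply', ih, map_zero]

instance : Zero (PDO R d) := ⟨⟨fun _ => 0, ⟨0, fun _ _ => rfl⟩⟩⟩

instance : One (PDO R d) :=
  ⟨⟨fun n => if n = 0 then 1 else 0, ⟨0, fun n hn => if_neg (by omega)⟩⟩⟩

instance : Add (PDO R d) :=
  ⟨fun A B => ⟨fun n => A.coeff n + B.coeff n, by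
    obtain ⟨N, hN⟩ := A.bdd
    obtain ⟨M, hM⟩ := B.bdd
    exact ⟨max N M, fun n hn => by
      show A.coeff n + B.coeff n = 0
      rw [hN n (lt_of_le_of_lt (le_max_left N M) hn),
        hM n (lt_of_le_of_lt (le_max_right N M) hn), add_zero]⟩⟩⟩

instance : Neg (PDO R d) :=
  ⟨fun A => ⟨fun n => -A.coeff n, by
    obtain ⟨N, hN⟩ := A.bdd
    exact ⟨N, fun n hn => by show -A.coeff n = 0; rw [hN n hn, neg_zero]⟩⟩⟩

instance : SMul ℚ (PDO R d) :=
  ⟨fun c A => ⟨fun n => c • A.coeff n, by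
    obtain ⟨N, hN⟩ := A.bdd
    exact ⟨N, fun n hn => by show c • A.coeff n = 0; rw [hN n hn, smul_zero]⟩⟩⟩

instance : AddCommGroup (PDO R d) where
  add := (· + ·)
  zero := 0
  neg := Neg.neg
  add_assoc A B C := ext' (funext fun n => add_assoc (A.coeff n) (B.coeff n) (C.coeff n))
  zero_add A := ext' (funext fun n => zero_add (A.coeff n))
  add_zero A := ext' (funext fun n => add_zero (A.coeff n))
  add_comm A B := ext' (funext fun n => add_comm (A.coeff n) (B.coeff n))
  neg_add_cancel A := ext' (funext fun n => neg_add_cancel (A.coeff n))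
  nsmul := nsmulRec
  zsmul := zsmulRec

/-- The product of pseudo-differential operators, determined by the commutation rule
`∂^k · f = Σ_{l ≥ 0} C(k,l) (∂^l f) ∂^(k-l)`. -/
noncomputable instance : Mul (PDO R d) :=
  ⟨fun A B =>
    ⟨fun n => ∑ᶠ (k : ℤ) (m : ℤ),
        if _ : 0 ≤ k + m - n then
          A.coeff k * (gbinom k (k + m - n).toNat • (d^[(k + m - n).toNat] (B.coeff m)))
        else 0, by
      obtain ⟨N, hN⟩ := A.bdd
      obtain ⟨M, hM⟩ := B.bdd
      refine ⟨N + M, fun n hn => ?_⟩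
      have hz : ∀ k m : ℤ,
          (if _ : 0 ≤ k + m - n then
            A.coeff k * (gbinom k (k + m - n).toNat • (d^[(k + m - n).toNat] (B.coeff m)))
          else 0) = 0 := by
        intro k m
        by_cases hl : 0 ≤ k + m - n
        · rw [dif_pos hl]
          by_cases hk : N < k
          · rw [hN k hk, zero_mul]
          · rw [hM m (by omega), iterD_zero, smul_zero, mul_zero]
        · rw [dif_neg hl]
      simp only [hz, finsum_zero]⟩⟩

noncomputable def npow (A : PDO R d) : ℕ → PDO R d
  | 0 => 1
  | n + 1 => npow A n * A

noncomputable instance : Pow (PDO R d) ℕ := ⟨fun A n => A.npow n⟩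

/-- The monomial `r ∂^k`. -/
def mono (r : R) (k : ℤ) : PDO R d :=
  ⟨fun n => if n = k then r else 0, ⟨k, fun n hn => if_neg (by omega)⟩⟩

/-- The constant (order-zero) operator `r`. -/
def const (r : R) : PDO R d := mono r 0

/-- The operator `∂`. -/
def del : PDO R d := mono (1 : R) 1

/-- The operator `h∂`. -/
def hdel (h : Rˣ) : PDO R d := mono (h : R) 1

/-- The Lax operator `L = h²∂² + 2u`. -/
def Lop (h : Rˣ) (u : R) : PDO R d :=
  ⟨fun n => if n = 2 then (h : R) ^ 2 else if n = 0 then 2 * u else 0,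
   ⟨2, fun n hn => by
      show (if n = 2 then (h : R) ^ 2 else if n = 0 then 2 * u else 0) = 0
      rw [if_neg (by omega), if_neg (by omega)]⟩⟩

/-- The differential part `A₊`. -/
def pos (A : PDO R d) : PDO R d :=
  ⟨fun n => if 0 ≤ n then A.coeff n else 0, by
    obtain ⟨N, hN⟩ := A.bdd
    refine ⟨N, fun n hn => ?_⟩
    show (if 0 ≤ n then A.coeff n else 0) = 0
    by_cases h0 : (0 : ℤ) ≤ n
    · rw [if_pos h0]; exact hN n hn
    · rw [if_neg h0]⟩

/-- The integral part `A₋ = A − A₊`. -/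
def negp (A : PDO R d) : PDO R d :=
  ⟨fun n => if n < 0 then A.coeff n else 0, ⟨0, fun n hn => if_neg (by omega)⟩⟩

/-- The residue `Res_∂ A = a₋₁`. -/
def res (A : PDO R d) : R := A.coeff (-1)

/-- The formal adjoint, determined by `(f ∂^k)* = (−∂)^k · f`. -/
noncomputable def adj (A : PDO R d) : PDO R d :=
  ⟨fun n => ∑ᶠ k : ℤ,
      if _ : 0 ≤ k - n then
        (((-1 : ℚ) ^ k) * gbinom k (k - n).toNat) • (d^[(k - n).toNat] (A.coeff k))
      else 0, by
    obtain ⟨N, hN⟩ := A.bdd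
    refine ⟨N, fun n hn => ?_⟩
    have hz : ∀ k : ℤ, (if _ : 0 ≤ k - n then
        (((-1 : ℚ) ^ k) * gbinom k (k - n).toNat) • (d^[(k - n).toNat] (A.coeff k))
      else 0) = 0 := by
      intro k
      by_cases hl : 0 ≤ k - n
      · rw [dif_pos hl, hN k (by omega), iterD_zero, smul_zero]
      · rw [dif_neg hl]
    simp only [hz, finsum_zero]⟩

/-- The operator `P(h∂) = Σ pₙ hⁿ ∂ⁿ` associated to the symbol `P(λ) = Σ pₙ λⁿ`. -/
noncomputable def ofSymbol (h : Rˣ) (A : PDO R d) : PDO R d :=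
  ⟨fun n => A.coeff n * ((h ^ n : Rˣ) : R), by
    obtain ⟨N, hN⟩ := A.bdd
    exact ⟨N, fun n hn => by show A.coeff n * ((h ^ n : Rˣ) : R) = 0; rw [hN n hn, zero_mul]⟩⟩

/-- Apply `d^[i]` to each coefficient. -/
def mapD (i : ℕ) (A : PDO R d) : PDO R d :=
  ⟨fun n => d^[i] (A.coeff n), by
    obtain ⟨N, hN⟩ := A.bdd
    exact ⟨N, fun n hn => by show d^[i] (A.coeff n) = 0; rw [hN n hn, iterD_zero]⟩⟩

/-- The coefficientwise extension of an additive map `D : R →+ R`. -/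
def mapHom (D : R →+ R) (A : PDO R d) : PDO R d :=
  ⟨fun n => D (A.coeff n), by
    obtain ⟨N, hN⟩ := A.bdd
    exact ⟨N, fun n hn => by show D (A.coeff n) = 0; rw [hN n hn, map_zero]⟩⟩

/-- The commutator `[A, B] = AB − BA`. -/
noncomputable def comm (A B : PDO R d) : PDO R d := A * B - B * A

end PDO

/-- The Leibniz rule: `d` is a derivation. -/
def Leibniz {R : Type} [CommRing R] [Algebra ℚ R] (d : R →+ R) : Prop :=
  ∀ a b : R, d (a * b) = a * d b + b * d a

/-- `aₙ = 1/(2n+1)!!`. -/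
def kdvA (n : ℕ) : ℚ := 1 / (Nat.doubleFactorial (2 * n + 1))

/-- `bₙ = (2n−1)!!` (with `b₀ = (−1)!! = 1`). -/
def kdvB (n : ℕ) : ℚ := (Nat.doubleFactorial (2 * n - 1) : ℕ)



/-!
Expanding the adjoint and the product (the intermediate sum collapses by Chu–Vandermonde), the
coefficient of `∂ⁿ` in `P(h∂) · Q(h∂)*` is
`∑_{k,k'} (-1)^k' C(k+k', k+k'-n) p_k ∂^(k+k'-n)(q_k') h^(k+k')`.
For `n = -1-t` the binomial coefficient vanishes unless `k + k' = -1-j` with `0 ≤ j ≤ t`, and there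
upper negation `C(-1-j, t-j) = (-1)^(t-j) C(t, j)` identifies the coefficient of `∂^(-1-t)`,
up to the unit `(-1)^t h / t!`, with the coefficient of `yᵗ` in the residue.
-/

open Finset

theorem gbinom_eq_choose (k : ℤ) (l : ℕ) : gbinom k l = Ring.choose (k : ℚ) l := by
  rw [Ring.choose_eq_smul, ← Polynomial.aeval_eq_smeval, Polynomial.aeval_def,
    ← Polynomial.eval_map, descPochhammer_map, descPochhammer_eval_eq_prod_range, gbinom,
    smul_eq_mul, div_eq_inv_mul]

theorem gbinom_eq_zero_of_lt {a : ℤ} {r : ℕ} (ha : 0 ≤ a) (har : a < r) : gbinom a r = 0 := by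
  lift a to ℕ using ha
  rw [gbinom_eq_choose, Int.cast_natCast, Ring.choose_natCast,
    Nat.choose_eq_zero_of_lt (by exact_mod_cast har), Nat.cast_zero]

theorem gbinom_neg_one_sub (j r : ℕ) : gbinom (-1 - j) r = (-1) ^ r * (j + r).choose r := by
  have h₁ : ((-1 - j : ℤ) : ℚ) = -(j + 1) := by push_cast; ring
  have h₂ : (j : ℚ) + 1 + r - 1 = ((j + r : ℕ) : ℚ) := by push_cast; ring
  rw [gbinom_eq_choose, h₁, Ring.choose_neg, h₂, Ring.choose_natCast, Units.smul_def,
    Int.coe_negOnePow_natCast, zsmul_eq_mul, Int.cast_pow, Int.cast_neg, Int.cast_one]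

theorem sum_Icc_gbinom_mul_gbinom {k k' n : ℤ} (h : n ≤ k + k') :
    ∑ m ∈ Icc (n - k) k', gbinom k (k + m - n).toNat * gbinom k' (k' - m).toNat
      = gbinom (k + k') (k + k' - n).toNat := by
  rw [gbinom_eq_choose, Int.cast_add, Ring.add_choose_eq _ (Commute.all _ _)]
  refine sum_nbij' (fun m => ((k + m - n).toNat, (k' - m).toNat)) (fun p => n - k + p.1)
    ?_ ?_ ?_ ?_ ?_
  · intro m hm
    simp only [mem_Icc, HasAntidiagonal.mem_antidiagonal] at hm ⊢
    omega
  · intro p hp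
    simp only [mem_Icc, HasAntidiagonal.mem_antidiagonal] at hp ⊢
    omega
  · intro m hm
    simp only [mem_Icc] at hm
    omega
  · intro p hp
    simp only [HasAntidiagonal.mem_antidiagonal] at hp
    ext <;> omega
  · intro m _
    simp only [gbinom_eq_choose]

theorem neg_one_pow_mul_inv_factorial_mul_gbinom (i : ℤ) {j t : ℕ} (hjt : j ≤ t) :
    (-1 : ℚ) ^ t * (t.factorial : ℚ)⁻¹ * ((-1 : ℚ) ^ (-1 - i - j) * gbinom (-1 - j) (t - j))
      = (-1 : ℚ) ^ (-1 - i) * (j.factorial : ℚ)⁻¹ * ((t - j).factorial : ℚ)⁻¹ := by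
  obtain ⟨s, rfl⟩ := Nat.exists_eq_add_of_le hjt
  rw [Nat.add_sub_cancel_left, gbinom_neg_one_sub, Nat.cast_choose ℚ (Nat.le_add_left s j),
    Nat.add_sub_cancel, zpow_sub₀ (by norm_num), zpow_natCast, pow_add]
  field_simp
  rw [← pow_mul, mul_comm, pow_mul, neg_one_sq, one_pow]

theorem AddMonoidHom.iterate_map_sum {M ι : Type*} [AddCommMonoid M] (f : M →+ M) (s : ℕ)
    (F : Finset ι) (g : ι → M) : f^[s] (∑ i ∈ F, g i) = ∑ i ∈ F, f^[s] (g i) :=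
  map_sum ((show AddMonoid.End M from f) ^ s) g F

theorem AddMonoidHom.iterate_map_rat_smul {M : Type*} [AddCommGroup M] [Module ℚ M]
    (f : M →+ M) (s : ℕ) (q : ℚ) (x : M) : f^[s] (q • x) = q • f^[s] x :=
  map_rat_smul ((show AddMonoid.End M from f) ^ s) q x

theorem finsum_ite_eq_sum_Icc {M : Type*} [AddCommMonoid M] {p : ℤ → Prop} [DecidablePred p]
    {g : ℤ → M} {a N : ℤ} (hp : ∀ m, p m ↔ a ≤ m) (hg : ∀ m, N < m → g m = 0) :
    ∑ᶠ m, (if p m then g m else 0) = ∑ m ∈ Icc a N, g m := by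
  rw [finsum_eq_finsetSum_of_support_subset (s := Icc a N)]
  · exact sum_congr rfl fun m hm => if_pos ((hp m).2 (mem_Icc.1 hm).1)
  · intro m hm
    rw [Function.mem_support, ne_eq, ite_eq_right_iff, not_forall] at hm
    obtain ⟨hpm, hgm⟩ := hm
    exact mem_Icc.2 ⟨(hp m).1 hpm, not_lt.1 fun hNm => hgm (hg m hNm)⟩

namespace Leibniz

variable {R : Type} [CommRing R] [Algebra ℚ R] {d : R →+ R}

theorem map_one (hd : Leibniz d) : d 1 = 0 := by
  simpa using hd 1 1

def constUnits (hd : Leibniz d) : Subgroup Rˣ where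
  carrier := {u | d u = 0}
  one_mem' := hd.map_one
  mul_mem' {u v} (hu : d u = 0) (hv : d v = 0) := by
    rw [Set.mem_ofPred_eq, Units.val_mul, hd, hu, hv, mul_zero, mul_zero, add_zero]
  inv_mem' {u} (hu : d u = 0) := by
    have h := hd u ↑u⁻¹
    rw [Units.mul_inv, hd.map_one, hu, mul_zero, add_zero, eq_comm, Units.mul_right_eq_zero] at h
    exact h

theorem map_units_zpow (hd : Leibniz d) {u : Rˣ} (hu : d u = 0) (k : ℤ) :
    d ((u ^ k : Rˣ) : R) = 0 :=
  hd.constUnits.zpow_mem hu k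

theorem iterate_mul_of_map_eq_zero (hd : Leibniz d) {u : R} (hu : d u = 0) (s : ℕ) (x : R) :
    d^[s] (x * u) = d^[s] x * u := by
  induction s with
  | zero => rfl
  | succ s ih =>
    rw [Function.iterate_succ_apply', ih, hd, hu, mul_zero, zero_add, mul_comm,
      Function.iterate_succ_apply']

end Leibniz

namespace PDO

variable {R : Type} [CommRing R] [Algebra ℚ R] {d : R →+ R}

theorem coeff_ofSymbol (h : Rˣ) (A : PDO R d) (n : ℤ) :
    (ofSymbol h A).coeff n = A.coeff n * ((h ^ n : Rˣ) : R) := rfl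

theorem negp_eq_zero_iff (A : PDO R d) : negp A = 0 ↔ ∀ t : ℕ, A.coeff (-1 - t) = 0 := by
  constructor
  · intro h t
    have := congrArg (fun B : PDO R d => B.coeff (-1 - t)) h
    exact (if_pos (by omega)).symm.trans this
  · intro h
    refine ext' (funext fun n => ?_)
    show (if n < 0 then A.coeff n else 0) = 0
    split_ifs with hn
    · obtain ⟨t, rfl⟩ : ∃ t : ℕ, n = -1 - t := ⟨(-1 - n).toNat, by omega⟩
      exact h t
    · rfl

theorem coeff_adj_eq_sum (A : PDO R d) {N : ℤ} (hA : ∀ n, N < n → A.coeff n = 0) (m : ℤ) :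
    (adj A).coeff m = ∑ k ∈ Icc m N,
      ((-1 : ℚ) ^ k * gbinom k (k - m).toNat) • d^[(k - m).toNat] (A.coeff k) :=
  finsum_ite_eq_sum_Icc (fun k => sub_nonneg) fun k hk => by
    rw [hA k hk, iterD_zero, smul_zero]

theorem coeff_adj_eq_zero (A : PDO R d) {N : ℤ} (hA : ∀ n, N < n → A.coeff n = 0) {m : ℤ}
    (hm : N < m) : (adj A).coeff m = 0 := by
  rw [coeff_adj_eq_sum A hA, Icc_eq_empty_of_lt hm, sum_empty]

theorem coeff_mul_eq_sum (A B : PDO R d) {N : ℤ} (hA : ∀ n, N < n → A.coeff n = 0)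
    (hB : ∀ n, N < n → B.coeff n = 0) (n : ℤ) :
    (A * B).coeff n = ∑ k ∈ Icc (n - N) N, ∑ m ∈ Icc (n - k) N,
      A.coeff k * (gbinom k (k + m - n).toNat • d^[(k + m - n).toNat] (B.coeff m)) := by
  have inner : ∀ k : ℤ, ∑ᶠ m : ℤ, (if 0 ≤ k + m - n then
        A.coeff k * (gbinom k (k + m - n).toNat • d^[(k + m - n).toNat] (B.coeff m)) else 0)
      = ∑ m ∈ Icc (n - k) N,
        A.coeff k * (gbinom k (k + m - n).toNat • d^[(k + m - n).toNat] (B.coeff m)) := fun k =>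
    finsum_ite_eq_sum_Icc (fun m => by omega) fun m hm => by
      rw [hB m hm, iterD_zero, smul_zero, mul_zero]
  refine (finsum_congr inner).trans (finsum_eq_finsetSum_of_support_subset _ fun k hk => ?_)
  rw [Function.mem_support] at hk
  rw [coe_Icc, Set.mem_Icc]
  constructor
  · by_contra! hk'
    exact hk (by rw [Icc_eq_empty_of_lt (by omega), sum_empty])
  · by_contra! hk'
    exact hk (sum_eq_zero fun m _ => by rw [hA k hk', zero_mul])

/-- The contribution of `a_k ∂^k` and `(b_k' ∂^k')*` to the coefficient of `∂ⁿ` in `A B*`. -/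
noncomputable def mulAdjTerm (A B : PDO R d) (n k k' : ℤ) : R :=
  ((-1 : ℚ) ^ k' * gbinom (k + k') (k + k' - n).toNat) •
    (A.coeff k * d^[(k + k' - n).toNat] (B.coeff k'))

theorem mulAdjTerm_eq_zero (A B : PDO R d) {n k k' : ℤ} (hn : n < 0) (hkk' : 0 ≤ k + k') :
    mulAdjTerm A B n k k' = 0 := by
  rw [mulAdjTerm, gbinom_eq_zero_of_lt hkk' (by omega), mul_zero, zero_smul]

theorem coeff_mul_adj_eq_sum (A B : PDO R d) {N : ℤ} (hA : ∀ n, N < n → A.coeff n = 0)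
    (hB : ∀ n, N < n → B.coeff n = 0) (n : ℤ) :
    (A * adj B).coeff n = ∑ k ∈ Icc (n - N) N, ∑ k' ∈ Icc (n - k) N, mulAdjTerm A B n k k' := by
  rw [coeff_mul_eq_sum A (adj B) hA (fun m => coeff_adj_eq_zero B hB)]
  refine sum_congr rfl fun k _ => ?_
  have expand : ∀ m ∈ Icc (n - k) N,
      A.coeff k * (gbinom k (k + m - n).toNat • d^[(k + m - n).toNat] ((adj B).coeff m))
        = ∑ k' ∈ Icc m N, (gbinom k (k + m - n).toNat * ((-1 : ℚ) ^ k' * gbinom k' (k' - m).toNat))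
          • (A.coeff k * d^[(k + k' - n).toNat] (B.coeff k')) := by
    intro m hm
    rw [coeff_adj_eq_sum B hB, d.iterate_map_sum, smul_sum, mul_sum]
    refine sum_congr rfl fun k' hk' => ?_
    rw [mem_Icc] at hm hk'
    rw [d.iterate_map_rat_smul, ← Function.iterate_add_apply,
      show (k + m - n).toNat + (k' - m).toNat = (k + k' - n).toNat by omega, smul_smul,
      mul_smul_comm]
  rw [sum_congr rfl expand, sum_comm' (t' := Icc (n - k) N) (s' := fun k' => Icc (n - k) k')
    (fun m k' => by simp only [mem_Icc]; omega)]
  refine sum_congr rfl fun k' hk' => ?_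
  rw [mulAdjTerm, ← sum_smul]
  congr 1
  simp only [mul_left_comm _ ((-1 : ℚ) ^ k')]
  rw [← mul_sum, sum_Icc_gbinom_mul_gbinom (by rw [mem_Icc] at hk'; omega)]

/-- The coefficient of `yᵗ` in `Res_λ (P(λ) · Q^y(−λ) · e^(−yλ/h)) dλ` is
`∑ⱼ ∑ᵢ residueTerm h P Q t j i`: `j` counts the powers of `y` taken from the exponential,
`t - j` those from the Taylor shift `Q^y`. -/
noncomputable def residueTerm (h : Rˣ) (P Q : PDO R d) (t j : ℕ) (i : ℤ) : R :=
  ((-1 : ℚ) ^ (-1 - i) * ((Nat.factorial j : ℚ))⁻¹ * ((Nat.factorial (t - j) : ℚ))⁻¹)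
    • (P.coeff i * (d^[t - j] (Q.coeff (-1 - i - (j : ℤ)))) * ((h⁻¹ ^ j : Rˣ) : R))

theorem residueTerm_eq (hd : Leibniz d) {h : Rˣ} (hdh : d h = 0) (P Q : PDO R d) (i : ℤ)
    {t j : ℕ} (hjt : j ≤ t) :
    residueTerm h P Q t j i = ((-1 : ℚ) ^ t * (t.factorial : ℚ)⁻¹) •
      (mulAdjTerm (ofSymbol h P) (ofSymbol h Q) (-1 - t) i (-1 - i - j) * h) := by
  have hexp : (i + (-1 - i - j) - (-1 - t)).toNat = t - j := by omega
  have hunits : ((h ^ i : Rˣ) : R) * ((h ^ (-1 - i - j) : Rˣ) : R) * h = ((h⁻¹ ^ j : Rˣ) : R) := by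
    rw [← Units.val_mul, ← Units.val_mul]
    congr 1
    group
  rw [mulAdjTerm, coeff_ofSymbol, coeff_ofSymbol, hexp, show i + (-1 - i - j) = -1 - j by ring,
    hd.iterate_mul_of_map_eq_zero (hd.map_units_zpow hdh _), smul_mul_assoc, smul_smul,
    neg_one_pow_mul_inv_factorial_mul_gbinom i hjt, residueTerm, ← hunits]
  congr 1
  ring

theorem finsum_residueTerm_eq_sum_Icc (h : Rˣ) {P Q : PDO R d} {N : ℤ}
    (hP : ∀ n, N < n → P.coeff n = 0) (hQ : ∀ n, N < n → Q.coeff n = 0) {t j : ℕ}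
    (hjt : j ≤ t) :
    ∑ᶠ i : ℤ, residueTerm h P Q t j i = ∑ i ∈ Icc (-1 - t - N) N, residueTerm h P Q t j i := by
  refine finsum_eq_finsetSum_of_support_subset _ fun i hi => ?_
  rw [Function.mem_support] at hi
  rw [coe_Icc, Set.mem_Icc]
  constructor
  · by_contra! hi'
    exact hi (by rw [residueTerm, hQ _ (by omega), iterD_zero, mul_zero, zero_mul, smul_zero])
  · by_contra! hi'
    exact hi (by rw [residueTerm, hP _ hi', zero_mul, zero_mul, smul_zero])

theorem sum_residueTerm_eq (hd : Leibniz d) {h : Rˣ} (hdh : d h = 0) (P Q : PDO R d) (t : ℕ) :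
    ∑ j ∈ range (t + 1), ∑ᶠ i : ℤ, residueTerm h P Q t j i =
      ((-1 : ℚ) ^ t * (t.factorial : ℚ)⁻¹) •
        ((ofSymbol h P * adj (ofSymbol h Q)).coeff (-1 - t) * h) := by
  obtain ⟨NP, hNP⟩ := P.bdd
  obtain ⟨NQ, hNQ⟩ := Q.bdd
  set N := max NP NQ
  have hP : ∀ n, N < n → P.coeff n = 0 := fun n hn => hNP n (by omega)
  have hQ : ∀ n, N < n → Q.coeff n = 0 := fun n hn => hNQ n (by omega)
  rw [coeff_mul_adj_eq_sum (N := N) _ _ (fun n hn => by rw [coeff_ofSymbol, hP n hn, zero_mul])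
    (fun n hn => by rw [coeff_ofSymbol, hQ n hn, zero_mul]), sum_mul, smul_sum,
    sum_congr rfl fun j hj =>
      finsum_residueTerm_eq_sum_Icc h hP hQ (Nat.le_of_lt_succ (mem_range.1 hj)), sum_comm]
  refine sum_congr rfl fun i _ => ?_
  rw [sum_mul, smul_sum]
  refine sum_bij_ne_zero (fun j _ _ => -1 - i - j) ?_ ?_ ?_ ?_
  · intro j hj hne
    rw [mem_range] at hj
    rw [mem_Icc]
    refine ⟨by omega, not_lt.1 fun hN => hne ?_⟩
    rw [residueTerm, hQ _ hN, iterD_zero, mul_zero, zero_mul, smul_zero]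
  · intro j₁ _ _ j₂ _ _ hj
    omega
  · intro k' hk' hne
    rw [mem_Icc] at hk'
    have hk'i : k' ≤ -1 - i := not_lt.1 fun hlt => hne (by
      rw [mulAdjTerm_eq_zero _ _ (by omega) (by omega), zero_mul, smul_zero])
    refine ⟨(-1 - i - k').toNat, mem_range.2 (by omega), ?_, by omega⟩
    rwa [residueTerm_eq hd hdh P Q i (by omega),
      show -1 - i - ((-1 - i - k').toNat : ℤ) = k' by omega]
  · intro j hj _
    exact residueTerm_eq hd hdh P Q i (Nat.le_of_lt_succ (mem_range.1 hj))

end PDO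

/-- **Fundamental Lemma.**  For symbols `P(λ) = Σ pₙλⁿ`, `Q(λ) = Σ qₙλⁿ`, the bilinear
residue equation `Res_λ (P(λ) · Q^y(−λ) · e^(−yλ/h)) dλ = 0`, holding identically in `R[[y]]`
(i.e. each coefficient of a power `yᵗ` vanishes), is equivalent to the pseudo-differential
operator equation `(P(h∂) · Q(h∂)*)₋ = 0`. -/
theorem fundamental_lemma
    (R : Type) [CommRing R] [Algebra ℚ R] (d : R →+ R)
    (hd : Leibniz d) (h : Rˣ) (hdh : d (h : R) = 0)
    (P Q : PDO R d) :
    (∀ t : ℕ, ∑ j ∈ Finset.range (t + 1), ∑ᶠ i : ℤ,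
        (((-1 : ℚ) ^ (-1 - i) * ((Nat.factorial j : ℚ))⁻¹ * ((Nat.factorial (t - j) : ℚ))⁻¹)
          • (P.coeff i * (d^[t - j] (Q.coeff (-1 - i - (j : ℤ)))) * ((h⁻¹ ^ j : Rˣ) : R))) = 0)
      ↔ PDO.negp (PDO.ofSymbol h P * PDO.adj (PDO.ofSymbol h Q)) = 0 := by
  rw [PDO.negp_eq_zero_iff]
  refine forall_congr' fun t => ?_
  have key := PDO.sum_residueTerm_eq hd hdh P Q t
  simp only [PDO.residueTerm] at key
  rw [key, smul_eq_zero_iff_right (by positivity), Units.mul_left_eq_zero]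
end

section
/- For n ≥ 0 set aₙ = 1/(2n+1)!! ∈ ℚ. Then for every integer ℓ ≥ 1 the number d_ℓ := (1/2) Σ_{i+j=ℓ−1, i,j≥0} (−1)^{j+1} aᵢ aⱼ equals 0 when ℓ is even, and equals −a_{ℓ−1}/(2ℓ) when ℓ is odd. -/
/-!
Write `cᵢ = (2i+1) aᵢ`, so that `cᵢ₊₁ = aᵢ` and `c₀ = a₀ = 1`. On the antidiagonal `i + j = m`
one has `cᵢ aⱼ + aᵢ cⱼ = 2(m+1) aᵢ aⱼ`, and the alternating sum of `cᵢ aⱼ + aᵢ cⱼ` telescopes to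
`(1 + (-1)^m) a_m`. Hence `2(m+1) Σ_{i+j=m} (-1)^j aᵢ aⱼ = (1 + (-1)^m) a_m`; take `m = ℓ - 1`.
-/

open Finset

theorem Finset.Nat.sum_antidiagonal_neg_one_pow_mul_telescope {R : Type*} [CommRing R]
    (a c : ℕ → R) (hc : ∀ i, c (i + 1) = a i) (m : ℕ) :
    ∑ p ∈ antidiagonal m, (-1) ^ p.2 * (c p.1 * a p.2 + a p.1 * c p.2)
      = (1 + (-1) ^ m) * (c 0 * a m) := by
  cases m with
  | zero => simp only [antidiagonal_zero, sum_singleton, pow_zero, one_mul]; ring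
  | succ k =>
    have hleft : ∑ p ∈ antidiagonal (k + 1), (-1) ^ p.2 * (c p.1 * a p.2)
        = (-1) ^ (k + 1) * (c 0 * a (k + 1)) + ∑ p ∈ antidiagonal k, (-1) ^ p.2 * (a p.1 * a p.2) := by
      simp only [Nat.sum_antidiagonal_succ, hc]
    have hright : ∑ p ∈ antidiagonal (k + 1), (-1) ^ p.2 * (a p.1 * c p.2)
        = c 0 * a (k + 1) - ∑ p ∈ antidiagonal k, (-1) ^ p.2 * (a p.1 * a p.2) := by
      simp only [Nat.sum_antidiagonal_succ', hc, pow_succ, pow_zero]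
      rw [sub_eq_add_neg, ← sum_neg_distrib]
      congr 1
      · ring
      · exact sum_congr rfl fun p _ => by ring
    simp only [mul_add, sum_add_distrib, hleft, hright]
    ring

lemma kdvA_zero : kdvA 0 = 1 := by simp [kdvA]

lemma mul_kdvA_succ (i : ℕ) : (2 * i + 3 : ℚ) * kdvA (i + 1) = kdvA i := by
  have hpos : (0 : ℚ) < (2 * i + 1).doubleFactorial := by exact_mod_cast Nat.doubleFactorial_pos _
  rw [kdvA, kdvA, show 2 * (i + 1) + 1 = 2 * i + 1 + 2 by ring, Nat.doubleFactorial_add_two]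
  push_cast
  field_simp
  ring

lemma kdvA_alternating_self_convolution (m : ℕ) :
    (2 * (m + 1) : ℚ) * ∑ p ∈ antidiagonal m, (-1) ^ p.2 * (kdvA p.1 * kdvA p.2)
      = (1 + (-1) ^ m) * kdvA m := by
  have key := Nat.sum_antidiagonal_neg_one_pow_mul_telescope kdvA (fun i => (2 * i + 1) * kdvA i)
    (fun i => by rw [← mul_kdvA_succ i]; push_cast; ring) m
  simp only [Nat.cast_zero, mul_zero, zero_add, one_mul, kdvA_zero] at key
  rw [← key, mul_sum]
  refine sum_congr rfl fun p hp => ?_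
  have hm : (p.1 + p.2 : ℚ) = m := by exact_mod_cast mem_antidiagonal.mp hp
  rw [← hm]
  ring

/-- `d_ℓ := (1/2) Σ_(i+j=ℓ−1) (−1)^(j+1) aᵢaⱼ` is `0` for even `ℓ` and `−a_(ℓ−1)/(2ℓ)` for odd `ℓ`. -/
theorem d_ell_evaluation (l : ℕ) (hl : 1 ≤ l) :
    (2 : ℚ)⁻¹ * ∑ i ∈ Finset.range l, (-1 : ℚ) ^ (l - 1 - i + 1) * kdvA i * kdvA (l - 1 - i)
      = if Even l then 0 else -kdvA (l - 1) / (2 * l) := by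
  obtain ⟨m, rfl⟩ : ∃ m, l = m + 1 := ⟨l - 1, by omega⟩
  simp only [Nat.add_sub_cancel]
  have hsum : ∑ i ∈ range (m + 1), (-1 : ℚ) ^ (m - i + 1) * kdvA i * kdvA (m - i)
      = -((1 + (-1) ^ m) * kdvA m / (2 * (m + 1))) := by
    rw [← kdvA_alternating_self_convolution, ← Nat.sum_antidiagonal_eq_sum_range_succ
      (fun i j => (-1 : ℚ) ^ (j + 1) * kdvA i * kdvA j),
      mul_div_cancel_left₀ _ (by positivity), ← sum_neg_distrib]
    exact sum_congr rfl fun p _ => by ring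
  rw [hsum]
  split_ifs with h
  · have hm : Odd m := by simpa [Nat.even_add_one] using h
    rw [hm.neg_one_pow]
    ring
  · have hm : Even m := by simpa [Nat.even_add_one] using h
    rw [hm.neg_one_pow]
    push_cast
    ring
end

section
/- For n ≥ 0 set bₙ = (2n−1)!! ∈ ℚ (so b₀ = 1). Then for every integer ℓ ≥ 1 the number f_ℓ := (1/2) Σ_{i+j=ℓ−1, i,j≥0} (−1)^{i+1} bᵢ bⱼ equals 0 when ℓ is even, and equals −b_ℓ/(2ℓ) when ℓ is odd. -/
theorem two_mul_mul_sum_alternating_convolution_eq {R : Type*} [CommRing R] (b : ℕ → R)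
    (hb : ∀ n, b (n + 1) = (2 * n + 1) * b n) (l : ℕ) :
    2 * l * ∑ i ∈ Finset.range l, (-1 : R) ^ i * b i * b (l - 1 - i)
      = (1 - (-1) ^ l) * b 0 * b l := by
  let g : ℕ → R := fun i ↦ (-1) ^ i * b i * b (l - i)
  have hterm : ∀ i ∈ Finset.range l,
      2 * l * ((-1 : R) ^ i * b i * b (l - 1 - i)) = g i - g (i + 1) := by
    intro i hi
    obtain ⟨k, rfl⟩ := Nat.exists_eq_add_of_lt (Finset.mem_range.mp hi)
    simp only [g, show i + k + 1 - 1 - i = k by omega, show i + k + 1 - i = k + 1 by omega,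
      show i + k + 1 - (i + 1) = k by omega, hb, pow_succ]
    push_cast
    ring
  rw [Finset.mul_sum, Finset.sum_congr rfl hterm, Finset.sum_range_sub']
  simp only [g, pow_zero, Nat.sub_zero, Nat.sub_self]
  ring

theorem kdvB_zero : kdvB 0 = 1 := by
  simp [kdvB]

theorem kdvB_succ (n : ℕ) : kdvB (n + 1) = (2 * n + 1) * kdvB n := by
  rw [kdvB, kdvB, show 2 * (n + 1) - 1 = 2 * n + 1 by omega, Nat.doubleFactorial_add_one]
  push_cast
  ring

theorem f_ell_evaluation_general (l : ℕ) :
    (2 : ℚ)⁻¹ * ∑ i ∈ Finset.range l, (-1 : ℚ) ^ (i + 1) * kdvB i * kdvB (l - 1 - i)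
      = if Even l then 0 else -kdvB l / (2 * l) := by
  rcases Nat.eq_zero_or_pos l with rfl | hl
  · simp
  have key := two_mul_mul_sum_alternating_convolution_eq kdvB kdvB_succ l
  have hl0 : (l : ℚ) ≠ 0 := by positivity
  simp only [pow_succ, mul_neg_one, neg_mul, Finset.sum_neg_distrib, kdvB_zero, mul_one] at key ⊢
  split_ifs with hpar
  · rw [hpar.neg_one_pow, sub_self, zero_mul] at key
    simpa [hl0] using key
  · rw [(Nat.not_even_iff_odd.mp hpar).neg_one_pow] at key
    rw [eq_div_iff (mul_ne_zero two_ne_zero hl0)]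
    linear_combination -key / 2

/-- `f_ℓ := (1/2) Σ_(i+j=ℓ−1) (−1)^(i+1) bᵢbⱼ` is `0` for even `ℓ` and `−b_ℓ/(2ℓ)` for odd `ℓ`. -/
theorem f_ell_evaluation (l : ℕ) (hl : 1 ≤ l) :
    (2 : ℚ)⁻¹ * ∑ i ∈ Finset.range l, (-1 : ℚ) ^ (i + 1) * kdvB i * kdvB (l - 1 - i)
      = if Even l then 0 else -kdvB l / (2 * l) :=
  f_ell_evaluation_general l
end

section
/- Let P ∈ Ψ(R) with P₊ = 1, and suppose that ( P · h²∂² · P⁻¹ )₋ = 0. Then P · h²∂² · P⁻¹ = h²∂² + 2u for some u ∈ R; in particular the coefficient of ∂¹ in P · h²∂² · P⁻¹ vanishes, its coefficient of ∂² is h², and it contains no powers ∂ⁿ with n ≥ 3. -/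
open scoped BigOperators

/-! Both `P` and its inverse `Q` have the shape `1 + a₋₁∂⁻¹ + ⋯`: for `P` this is `P₊ = 1`,
and for `Q` it follows from `QP = 1` by comparing coefficients from the top down. If `A` and `B`
have orders at most `a` and `b`, then `AB` has order at most `a + b`, with leading coefficients
`AₐBᵦ` and `AₐBᵦ₋₁ + Aₐ₋₁Bᵦ + a Aₐ ∂Bᵦ`. Hence `P h²∂² Q` has order 2 with leading coefficient
`h²`, and its `∂`-coefficient is `h²(p₋₁ + q₋₁) + 2h² ∂1`. This vanishes, since `∂1 = 0` and the
`∂⁻¹`-coefficient of `PQ = 1` is `p₋₁ + q₋₁`. An operator of order 2 without integral part is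
then `h²∂² + 2u`. -/

theorem finsum_finsum_eq_sum_sum {α β M : Type*} [AddCommMonoid M] (f : α → β → M)
    (s : Finset α) (t : Finset β) (h : ∀ a b, f a b ≠ 0 → a ∈ s ∧ b ∈ t) :
    ∑ᶠ (a) (b), f a b = ∑ a ∈ s, ∑ b ∈ t, f a b := by
  rw [finsum_eq_sum_of_support_subset _ (s := s)]
  · refine Finset.sum_congr rfl fun a _ => finsum_eq_sum_of_support_subset _ ?_
    exact fun b hb => (h a b hb).2
  · intro a ha
    obtain ⟨b, hb⟩ : ∃ b, f a b ≠ 0 := by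
      by_contra! hzero
      exact ha (finsum_eq_zero_of_forall_eq_zero hzero)
    exact (h a b hb).1

theorem Leibniz.map_one_s7 {R : Type} [CommRing R] [Algebra ℚ R] {d : R →+ R} (hd : Leibniz d) :
    d 1 = 0 := by
  simpa using hd 1 1

@[simp] theorem gbinom_zero (k : ℤ) : gbinom k 0 = 1 := by simp [gbinom]

@[simp] theorem gbinom_one (k : ℤ) : gbinom k 1 = k := by simp [gbinom]

namespace PDO

variable {R : Type} [CommRing R] [Algebra ℚ R] {d : R →+ R}

def OrderLE (A : PDO R d) (a : ℤ) : Prop := ∀ k, a < k → A.coeff k = 0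

theorem OrderLE.mono {A : PDO R d} {a b : ℤ} (ha : A.OrderLE a) (hab : a ≤ b) : A.OrderLE b :=
  fun k hk => ha k (hab.trans_lt hk)

section Product

variable {A B : PDO R d} {a b : ℤ}

theorem mul_coeff_eq_sum (ha : A.OrderLE a) (hb : B.OrderLE b) {n : ℤ} {s t : Finset ℤ}
    (hst : ∀ k m, k ≤ a → m ≤ b → n ≤ k + m → k ∈ s ∧ m ∈ t) :
    (A * B).coeff n = ∑ k ∈ s, ∑ m ∈ t,
      if _ : 0 ≤ k + m - n then
        A.coeff k * (gbinom k (k + m - n).toNat • d^[(k + m - n).toNat] (B.coeff m))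
      else 0 := by
  refine finsum_finsum_eq_sum_sum _ s t fun k m hkm => hst k m ?_ ?_ ?_
  · by_contra! hk
    simp [ha k hk] at hkm
  · by_contra! hm
    simp [hb m hm] at hkm
  · by_contra! hn
    exact hkm (dif_neg (by omega))

theorem mul_coeff_of_lt (ha : A.OrderLE a) (hb : B.OrderLE b) {n : ℤ} (hn : a + b < n) :
    (A * B).coeff n = 0 := by
  rw [mul_coeff_eq_sum ha hb (s := ∅) (t := ∅) fun k m hk hm hkm => by omega]
  rfl

theorem OrderLE.mul (ha : A.OrderLE a) (hb : B.OrderLE b) : (A * B).OrderLE (a + b) :=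
  fun _ => mul_coeff_of_lt ha hb

theorem mul_coeff_add (ha : A.OrderLE a) (hb : B.OrderLE b) :
    (A * B).coeff (a + b) = A.coeff a * B.coeff b := by
  rw [mul_coeff_eq_sum ha hb (s := {a}) (t := {b}) fun k m hk hm hkm => by simp; omega]
  simp

theorem mul_coeff_add_sub_one (ha : A.OrderLE a) (hb : B.OrderLE b) :
    (A * B).coeff (a + b - 1) = A.coeff a * B.coeff (b - 1) + A.coeff (a - 1) * B.coeff b
      + (a : ℚ) • (A.coeff a * d (B.coeff b)) := by
  rw [mul_coeff_eq_sum ha hb (s := {a, a - 1}) (t := {b, b - 1}) fun k m hk hm hkm => by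
    simp; omega]
  have hab : a ≠ a - 1 := by omega
  have hbb : b ≠ b - 1 := by omega
  simp only [Finset.sum_pair hab, Finset.sum_pair hbb]
  rw [dif_pos (by omega), dif_pos (by omega), dif_pos (by omega), dif_neg (by omega)]
  simp only [show a + b - (a + b - 1) = 1 by ring, show a + (b - 1) - (a + b - 1) = 0 by ring,
    show a - 1 + b - (a + b - 1) = 0 by ring]
  simp only [Int.toNat_one, gbinom_one, Function.iterate_one, Algebra.mul_smul_comm,
    Int.toNat_zero, gbinom_zero, Function.iterate_zero, id_eq, one_smul, add_zero]
  ring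

end Product

@[simp] theorem zero_coeff (n : ℤ) : (0 : PDO R d).coeff n = 0 := rfl

@[simp] theorem one_coeff (n : ℤ) : (1 : PDO R d).coeff n = if n = 0 then 1 else 0 := rfl

@[simp] theorem pos_coeff (A : PDO R d) (n : ℤ) :
    (pos A).coeff n = if 0 ≤ n then A.coeff n else 0 := rfl

@[simp] theorem negp_coeff (A : PDO R d) (n : ℤ) :
    (negp A).coeff n = if n < 0 then A.coeff n else 0 := rfl

theorem orderLE_zero_of_pos_eq_one {P : PDO R d} (hP : pos P = 1) : P.OrderLE 0 := by
  intro k hk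
  simpa [hk.le, hk.ne'] using congrArg (coeff · k) hP

theorem coeff_zero_of_pos_eq_one {P : PDO R d} (hP : pos P = 1) : P.coeff 0 = 1 := by
  simpa using congrArg (coeff · 0) hP

section Inverse

variable {P Q : PDO R d}

theorem OrderLE.of_add_one_of_mul_eq_one (hP : P.OrderLE 0) (hP0 : P.coeff 0 = 1)
    (hQP : Q * P = 1) {a : ℤ} (hQ : Q.OrderLE (a + 1)) (ha : 0 ≤ a) : Q.OrderLE a := by
  intro k hk
  rcases (Int.add_one_le_iff.mpr hk).eq_or_lt with rfl | hk'
  · have htop := mul_coeff_add hQ hP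
    rw [add_zero, hQP, hP0, mul_one] at htop
    simpa [show a + 1 ≠ 0 by omega] using htop.symm
  · exact hQ k hk'

theorem orderLE_zero_of_mul_eq_one (hP : P.OrderLE 0) (hP0 : P.coeff 0 = 1)
    (hQP : Q * P = 1) : Q.OrderLE 0 := by
  suffices ∀ j : ℕ, Q.OrderLE j → Q.OrderLE 0 by
    obtain ⟨a, ha⟩ : ∃ a, Q.OrderLE a := Q.bdd
    exact this a.toNat (ha.mono (Int.self_le_toNat a))
  intro j
  induction j with
  | zero => exact id
  | succ j ih =>
    intro hQ
    exact ih (OrderLE.of_add_one_of_mul_eq_one hP hP0 hQP hQ (by positivity))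

theorem coeff_zero_of_mul_eq_one (hP : P.OrderLE 0) (hP0 : P.coeff 0 = 1)
    (hQP : Q * P = 1) : Q.coeff 0 = 1 := by
  simpa [hQP, hP0] using
    (mul_coeff_add (orderLE_zero_of_mul_eq_one hP hP0 hQP) hP).symm

theorem coeff_neg_one_add_coeff_neg_one (hP : P.OrderLE 0) (hP0 : P.coeff 0 = 1)
    (hQ : Q.OrderLE 0) (hQ0 : Q.coeff 0 = 1) (hPQ : P * Q = 1) :
    P.coeff (-1) + Q.coeff (-1) = 0 := by
  simpa [hPQ, hP0, hQ0, add_comm] using (mul_coeff_add_sub_one hP hQ).symm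

end Inverse

section Lax

variable (h : Rˣ) (u : R)

@[simp] theorem Lop_coeff (n : ℤ) :
    (Lop h u : PDO R d).coeff n = if n = 2 then (h : R) ^ 2 else if n = 0 then 2 * u else 0 :=
  rfl

theorem orderLE_Lop : (Lop h u : PDO R d).OrderLE 2 := by
  intro k hk
  simp [show k ≠ 2 by omega, show k ≠ 0 by omega]

variable {h} {A : PDO R d}

theorem eq_Lop_of_orderLE_two (hA : A.OrderLE 2) (hA2 : A.coeff 2 = (h : R) ^ 2)
    (hA1 : A.coeff 1 = 0) (hneg : negp A = 0) : A = Lop h ((2 : ℚ)⁻¹ • A.coeff 0) := by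
  refine ext' (funext fun n => ?_)
  rcases lt_trichotomy n 0 with hn | rfl | hn
  · simpa [hn, hn.ne, show n ≠ 2 by omega] using congrArg (coeff · n) hneg
  · simp only [Lop_coeff]
    rw [mul_smul_comm, two_mul, ← two_smul ℚ, smul_smul]
    norm_num
  · rcases (show n = 1 ∨ n = 2 ∨ 2 < n by omega) with rfl | rfl | hn2
    · simpa using hA1
    · simpa using hA2
    · simp [hA n hn2, show n ≠ 2 by omega, hn.ne']

end Lax

end PDO

open PDO in
theorem dressed_operator_is_Lax_general
    (R : Type) [CommRing R] [Algebra ℚ R] (d : R →+ R)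
    (hd : Leibniz d) (h : Rˣ)
    (P Pinv : PDO R d) (hP : PDO.pos P = 1)
    (hPinv : P * Pinv = 1 ∧ Pinv * P = 1)
    (hcon : PDO.negp (P * PDO.Lop h 0 * Pinv) = 0) :
    ∃ u : R, P * PDO.Lop h 0 * Pinv = PDO.Lop h u := by
  have hPord := orderLE_zero_of_pos_eq_one hP
  have hP0 := coeff_zero_of_pos_eq_one hP
  have hQord := orderLE_zero_of_mul_eq_one hPord hP0 hPinv.2
  have hQ0 := coeff_zero_of_mul_eq_one hPord hP0 hPinv.2
  have hsum := coeff_neg_one_add_coeff_neg_one hPord hP0 hQord hQ0 hPinv.1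
  have hL := orderLE_Lop (d := d) h 0
  have hC : (P * Lop h 0).OrderLE 2 := by simpa using hPord.mul hL
  have hC2 : (P * Lop h 0).coeff 2 = (h : R) ^ 2 := by
    simpa [hP0] using mul_coeff_add hPord hL
  have hC1 : (P * Lop h 0).coeff 1 = P.coeff (-1) * (h : R) ^ 2 := by
    simpa [hP0] using mul_coeff_add_sub_one hPord hL
  refine ⟨_, eq_Lop_of_orderLE_two (by simpa using hC.mul hQord) ?_ ?_ hcon⟩
  · simpa [hC2, hQ0] using mul_coeff_add hC hQord
  · have hA1 := mul_coeff_add_sub_one hC hQord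
    simp only [add_zero, Int.reduceSub, hC2, zero_sub, Int.reduceNeg, hC1, hQ0, mul_one,
      Int.cast_ofNat, hd.map_one_s7, mul_zero, smul_zero] at hA1
    rw [hA1]
    linear_combination (h : R) ^ 2 * hsum

/-- If `P₊ = 1` and `(P·h²∂²·P⁻¹)₋ = 0` then `P·h²∂²·P⁻¹ = h²∂² + 2u` for some `u ∈ R`. -/
theorem dressed_operator_is_Lax
    (R : Type) [CommRing R] [Algebra ℚ R] (d : R →+ R)
    (hd : Leibniz d) (h : Rˣ) (hdh : d (h : R) = 0)
    (P Pinv : PDO R d) (hP : PDO.pos P = 1)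
    (hPinv : P * Pinv = 1 ∧ Pinv * P = 1)
    (hcon : PDO.negp (P * PDO.Lop h 0 * Pinv) = 0) :
    ∃ u : R, P * PDO.Lop h 0 * Pinv = PDO.Lop h u :=
  dressed_operator_is_Lax_general R d hd h P Pinv hP hPinv hcon
end
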